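/- arXiv:2306.06409 — 3 statements merged into one kernel-verified Lean document; each statement's English description precedes it below -/
import Mathlib

section
/- Combining the previous two facts: for the SCM C = U_C, X = C·U_X, Y = C·X·U_Y with U_C, U_X ~ N(0,1) and U_Y ~ N(1,1) independent, the minimum of E[Y] over all hard interventions do(X = x), x ∈ ℝ, equals 0, while there exists a functional intervention X = π(C) achieving E[Y] = -1 < 0. -/
open MeasureTheory ProbabilityTheory

/-!
Under a policy `X = pol(C)` the outcome is `C · pol(C) · U_Y`, and `U_Y` is independent of `C`,
so `E[Y] = E[C · pol(C)] · E[U_Y] = E[C · pol(C)]`. A hard intervention `pol ≡ x` gives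
`x · E[C] = 0`, whereas `pol(c) = -c` gives `-E[C²] = -1`.
-/

lemma integral_sq_gaussianReal (μ : ℝ) (v : NNReal) :
    ∫ x, x ^ 2 ∂gaussianReal μ v = v + μ ^ 2 := by
  have h := variance_eq_sub (memLp_id_gaussianReal (μ := μ) (v := v) 2)
  rw [variance_id_gaussianReal] at h
  simp only [Pi.pow_apply, id_eq] at h
  rw [integral_id_gaussianReal] at h
  linarith

theorem ProbabilityTheory.IndepFun.integral_mul_comp_mul {Ω : Type*} [MeasurableSpace Ω]
    {P : Measure Ω} {C Y : Ω → ℝ} (hCY : C ⟂ᵢ[P] Y) (hC : AEMeasurable C P)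
    (hY : AEStronglyMeasurable Y P) {pol : ℝ → ℝ} (hpol : Measurable pol) :
    ∫ ω, C ω * pol (C ω) * Y ω ∂P = (∫ c, c * pol c ∂P.map C) * ∫ ω, Y ω ∂P := by
  have hf : Measurable fun c ↦ c * pol c := measurable_id.mul hpol
  have h := (hCY.comp hf measurable_id).integral_mul_eq_mul_integral
    (hf.comp_aemeasurable hC).aestronglyMeasurable hY
  rw [integral_map hC hf.aestronglyMeasurable]
  exact h

theorem stmt2_general {Ω : Type*} [MeasurableSpace Ω] (P : Measure Ω) [IsProbabilityMeasure P]
    (UC UX UY : Ω → ℝ)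
    (hInd : iIndepFun ![UC, UX, UY] P)
    (hUC : P.map UC = gaussianReal 0 1)
    (hUY : P.map UY = gaussianReal 1 1) :
    ({e : ℝ | ∃ x : ℝ, e = ∫ ω, UC ω * x * UY ω ∂P} = {0} ∧
      IsLeast {e : ℝ | ∃ x : ℝ, e = ∫ ω, UC ω * x * UY ω ∂P} 0) ∧
    ∃ pol : ℝ → ℝ, Measurable pol ∧
      (∫ ω, UC ω * pol (UC ω) * UY ω ∂P = -1) ∧ (-1 : ℝ) < 0 := by
  have hCY : UC ⟂ᵢ[P] UY := by simpa using hInd.indepFun (i := 0) (j := 2) (by decide)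
  have hC : AEMeasurable UC P := .of_map_ne_zero (hUC ▸ IsProbabilityMeasure.ne_zero _)
  have hY : AEMeasurable UY P := .of_map_ne_zero (hUY ▸ IsProbabilityMeasure.ne_zero _)
  have hEY : ∫ ω, UY ω ∂P = 1 :=
    (HasLaw.integral_eq ⟨hY, hUY⟩).trans integral_id_gaussianReal
  have hard (x : ℝ) : ∫ ω, UC ω * x * UY ω ∂P = 0 := by
    rw [hCY.integral_mul_comp_mul hC hY.aestronglyMeasurable measurable_const, hUC,
      integral_mul_const, integral_id_gaussianReal]
    ring
  have hard_values : {e : ℝ | ∃ x : ℝ, e = ∫ ω, UC ω * x * UY ω ∂P} = {0} := by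
    ext e
    simp only [hard, exists_const, Set.mem_ofPred_eq, Set.mem_singleton_iff]
  refine ⟨⟨hard_values, hard_values ▸ isLeast_singleton⟩, fun c ↦ -c, measurable_neg, ?_,
    by norm_num⟩
  rw [hCY.integral_mul_comp_mul hC hY.aestronglyMeasurable measurable_neg, hUC, hEY]
  simp only [mul_neg, ← pow_two, integral_neg, integral_sq_gaussianReal]
  norm_num

/-- For the SCM C = U_C, X = C·U_X, Y = C·X·U_Y with U_C, U_X ~ N(0,1),
U_Y ~ N(1,1) independent, every hard intervention do(X = x) gives E[Y] = 0 (so the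
minimum over hard interventions is 0), while some measurable functional intervention
X = pol(C) achieves E[Y] = -1 < 0. -/
theorem stmt2 {Ω : Type*} [MeasurableSpace Ω] (P : Measure Ω) [IsProbabilityMeasure P]
    (UC UX UY : Ω → ℝ)
    (hInd : iIndepFun ![UC, UX, UY] P)
    (hUC : P.map UC = gaussianReal 0 1)
    (hUX : P.map UX = gaussianReal 0 1)
    (hUY : P.map UY = gaussianReal 1 1) :
    ({e : ℝ | ∃ x : ℝ, e = ∫ ω, UC ω * x * UY ω ∂P} = {0} ∧
      IsLeast {e : ℝ | ∃ x : ℝ, e = ∫ ω, UC ω * x * UY ω ∂P} 0) ∧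
    ∃ pol : ℝ → ℝ, Measurable pol ∧
      (∫ ω, UC ω * pol (UC ω) * UY ω ∂P = -1) ∧ (-1 : ℝ) < 0 :=
  stmt2_general P UC UX UY hInd hUC hUY
end

section
/- For the CHAIN SCM X = U_X, W = U_W, Z = -0.5X + U_Z, Y = -W - 3ZX + U_Y with independent N(0,1) noises, under the policy consisting of the functional intervention Z = a·X (for a ∈ ℝ) together with do(W = 1), one has E[Y] = -1 - 3a. In particular for any a > 0 this expectation is strictly smaller than -1, the optimal value attainable by hard interventions on Z and W alone. -/
open MeasureTheory ProbabilityTheory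
open scoped NNReal

namespace ProbabilityTheory

variable {Ω : Type*} [MeasurableSpace Ω] {P : Measure Ω} {X : Ω → ℝ} {μ : ℝ} {v : ℝ≥0}

lemma hasLaw_of_map_eq_gaussianReal (hX : P.map X = gaussianReal μ v) :
    HasLaw X (gaussianReal μ v) P where
  aemeasurable := aemeasurable_of_map_neZero (by rw [hX]; infer_instance)
  map_eq := hX

lemma HasLaw.memLp_gaussianReal (hX : HasLaw X (gaussianReal μ v) P) (p : ℝ≥0) :
    MemLp X p P := by
  rw [← Function.id_comp X, ← memLp_map_measure_iff aestronglyMeasurable_id hX.aemeasurable,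
    hX.map_eq]
  exact memLp_id_gaussianReal p

lemma HasLaw.integral_gaussianReal (hX : HasLaw X (gaussianReal μ v) P) :
    ∫ ω, X ω ∂P = μ := by
  rw [hX.integral_eq, integral_id_gaussianReal]

lemma HasLaw.integral_sq_gaussianReal [IsProbabilityMeasure P]
    (hX : HasLaw X (gaussianReal μ v) P) :
    ∫ ω, X ω ^ 2 ∂P = μ ^ 2 + v := by
  have hVar := variance_eq_sub (hX.memLp_gaussianReal 2)
  rw [hX.variance_eq, variance_id_gaussianReal, hX.integral_gaussianReal] at hVar
  simp only [Pi.pow_apply] at hVar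
  linarith

end ProbabilityTheory

theorem stmt6_general {Ω : Type*} [MeasurableSpace Ω] (P : Measure Ω) [IsProbabilityMeasure P]
    (UX UY : Ω → ℝ)
    (hUX : P.map UX = gaussianReal 0 1)
    (hUY : P.map UY = gaussianReal 0 1) :
    (∀ a : ℝ, ∫ ω, (-(1 : ℝ) - 3 * (a * UX ω) * UX ω + UY ω) ∂P = -1 - 3 * a) ∧
    (∀ a : ℝ, 0 < a →
        ∫ ω, (-(1 : ℝ) - 3 * (a * UX ω) * UX ω + UY ω) ∂P < -1) := by
  have hX := hasLaw_of_map_eq_gaussianReal hUX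
  have hY := hasLaw_of_map_eq_gaussianReal hUY
  have hX2 : Integrable (fun ω => UX ω ^ 2) P := (hX.memLp_gaussianReal 2).integrable_sq
  have hmean (a : ℝ) :
      ∫ ω, (-(1 : ℝ) - 3 * (a * UX ω) * UX ω + UY ω) ∂P = -1 - 3 * a := by
    have hsplit : (fun ω => -(1 : ℝ) - 3 * (a * UX ω) * UX ω + UY ω)
        = fun ω => (-1 - 3 * a * UX ω ^ 2) + UY ω := by
      funext ω; ring
    have hconst : Integrable (fun _ : Ω => (-1 : ℝ)) P := integrable_const _
    have hquad : Integrable (fun ω => -1 - 3 * a * UX ω ^ 2) P :=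
      hconst.sub (hX2.const_mul (3 * a))
    rw [hsplit, integral_add hquad ((hY.memLp_gaussianReal 1).integrable le_rfl),
      integral_sub hconst (hX2.const_mul (3 * a)), integral_const_mul,
      hX.integral_sq_gaussianReal, hY.integral_gaussianReal]
    simp
  exact ⟨hmean, fun a ha => by rw [hmean]; linarith⟩

/-- For the CHAIN SCM, under the policy consisting of the functional
intervention Z = a·X together with do(W = 1), Y = -1 - 3aX² + U_Y and
E[Y] = -1 - 3a; for any a > 0 this is strictly smaller than -1, the optimal value
attainable by hard interventions on Z and W alone. -/
theorem stmt6 {Ω : Type*} [MeasurableSpace Ω] (P : Measure Ω) [IsProbabilityMeasure P]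
    (UX UW UZ UY : Ω → ℝ)
    (hInd : iIndepFun ![UX, UW, UZ, UY] P)
    (hUX : P.map UX = gaussianReal 0 1)
    (hUW : P.map UW = gaussianReal 0 1)
    (hUZ : P.map UZ = gaussianReal 0 1)
    (hUY : P.map UY = gaussianReal 0 1) :
    (∀ a : ℝ, ∫ ω, (-(1 : ℝ) - 3 * (a * UX ω) * UX ω + UY ω) ∂P = -1 - 3 * a) ∧
    (∀ a : ℝ, 0 < a →
        ∫ ω, (-(1 : ℝ) - 3 * (a * UX ω) * UX ω + UY ω) ∂P < -1) :=
  stmt6_general P UX UY hUX hUY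
end

section
/- Let X ~ N(0,1), U_Y with E[U_Y] = 0, independent. For Y = -3ZX + U_Y, the functional intervention Z = aX with a ≥ 0 constrained so that |aX| has expectation budget E[|aX|] ≤ B (a cost constraint) yields optimal target effect E[Y] = -3a* where a* = B/E[|X|] = B·√(π/2). In contrast, any hard intervention Z = z with cost |z| ≤ B yields E[Y] = 0. Hence under equal budget B > 0, the best functional intervention strictly outperforms every budget-feasible hard intervention. -/
/-! For `X ~ N(0,1)` one has `E[X] = 0`, `E[X²] = 1` and `E|X| = √(2/π)`, the last because
`∫ |x| e^{-x²/2} dx = 2`. So the functional intervention `Z = aX` costs `a √(2/π)` and yields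
`E[Y] = -3a`: the budget caps `a` at `B √(π/2)`, which is attained. A constant intervention
`Z = z` yields `E[Y] = -3z E[X] = 0` whatever its cost. -/

open MeasureTheory ProbabilityTheory Real
open Set
open scoped NNReal

theorem integral_Ioi_mul_exp_neg_mul_sq {b : ℝ} (hb : 0 < b) :
    ∫ x in Ioi (0 : ℝ), x * exp (-b * x ^ 2) = (2 * b)⁻¹ := by
  have h := integral_mul_cexp_neg_mul_sq (b := (b : ℂ)) (by simpa using hb)
  rw [← Complex.ofReal_inj, ← integral_complex_ofReal]
  push_cast
  exact h

theorem integral_abs_mul_exp_neg_mul_sq {b : ℝ} (hb : 0 < b) :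
    ∫ x, |x| * exp (-b * x ^ 2) = b⁻¹ := by
  have h := integral_comp_abs (f := fun x ↦ x * exp (-b * x ^ 2))
  simp only [sq_abs] at h
  rw [h, integral_Ioi_mul_exp_neg_mul_sq hb]
  field_simp

theorem integral_abs_gaussianReal_zero (v : ℝ≥0) :
    ∫ x, |x| ∂gaussianReal 0 v = √(2 * v / π) := by
  rcases eq_or_ne v 0 with rfl | hv
  · simp
  have hv' : (0 : ℝ) < v := by positivity
  have hexp : ∀ x : ℝ, -(x - 0) ^ 2 / (2 * v) = -(2 * v : ℝ)⁻¹ * x ^ 2 := fun x ↦ by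
    field_simp; ring
  simp_rw [integral_gaussianReal_eq_integral_smul hv, gaussianPDFReal, hexp, smul_eq_mul]
  calc ∫ x, (√(2 * π * v))⁻¹ * exp (-(2 * v : ℝ)⁻¹ * x ^ 2) * |x|
      = (√(2 * π * v))⁻¹ * ∫ x, |x| * exp (-(2 * v : ℝ)⁻¹ * x ^ 2) := by
        rw [← integral_const_mul]; congr 1 with x; ring
    _ = (√(2 * π * v))⁻¹ * (2 * v) := by
        rw [integral_abs_mul_exp_neg_mul_sq (by positivity), inv_inv]
    _ = √(2 * v / π) := by
        rw [eq_comm, sqrt_eq_iff_mul_self_eq (by positivity) (by positivity)]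
        field_simp
        rw [sq_sqrt (by positivity)]

theorem integral_sq_gaussianReal_zero (v : ℝ≥0) :
    ∫ x, x ^ 2 ∂gaussianReal 0 v = v := by
  rw [← variance_of_integral_eq_zero aemeasurable_id' integral_id_gaussianReal,
    variance_fun_id_gaussianReal]

namespace ProbabilityTheory.HasLaw

variable {Ω : Type*} [MeasurableSpace Ω] {P : Measure Ω} {X U : Ω → ℝ} {μ : ℝ} {v : ℝ≥0}

lemma memLp_of_gaussianReal (hX : HasLaw X (gaussianReal μ v) P) (p : ℝ≥0) : MemLp X p P := by
  have h := memLp_id_gaussianReal (μ := μ) (v := v) p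
  rw [← hX.map_eq] at h
  exact h.comp_of_map hX.aemeasurable

lemma integral_sq_of_gaussianReal_zero (hX : HasLaw X (gaussianReal 0 v) P) :
    ∫ ω, X ω ^ 2 ∂P = v :=
  (hX.integral_comp (f := fun x ↦ x ^ 2) (by fun_prop)).trans (integral_sq_gaussianReal_zero v)

lemma integral_abs_of_gaussianReal_zero (hX : HasLaw X (gaussianReal 0 v) P) :
    ∫ ω, |X ω| ∂P = √(2 * v / π) :=
  (hX.integral_comp (f := fun x ↦ |x|) (by fun_prop)).trans (integral_abs_gaussianReal_zero v)

lemma integral_mul_mul_add (hX : HasLaw X (gaussianReal 0 v) P) (hU : Integrable U P)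
    (hU₀ : ∫ ω, U ω ∂P = 0) (c a : ℝ) :
    ∫ ω, (c * (a * X ω) * X ω + U ω) ∂P = c * a * v := by
  have hX2 : Integrable (fun ω ↦ c * a * X ω ^ 2) P :=
    ((hX.memLp_of_gaussianReal 2).integrable_sq).const_mul _
  calc ∫ ω, (c * (a * X ω) * X ω + U ω) ∂P = ∫ ω, (c * a * X ω ^ 2 + U ω) ∂P := by
        congr 1 with ω; ring
    _ = c * a * v := by
        rw [integral_add hX2 hU, integral_const_mul, hX.integral_sq_of_gaussianReal_zero, hU₀,
          add_zero]

lemma integral_const_mul_add (hX : HasLaw X (gaussianReal 0 v) P) (hU : Integrable U P)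
    (hU₀ : ∫ ω, U ω ∂P = 0) (b : ℝ) :
    ∫ ω, (b * X ω + U ω) ∂P = 0 := by
  have hX1 : Integrable (fun ω ↦ b * X ω) P :=
    (memLp_one_iff_integrable.mp (hX.memLp_of_gaussianReal 1)).const_mul _
  rw [integral_add hX1 hU, integral_const_mul, hX.integral_eq, integral_id_gaussianReal, hU₀]
  simp

lemma integral_abs_const_mul (hX : HasLaw X (gaussianReal 0 v) P) {a : ℝ} (ha : 0 ≤ a) :
    ∫ ω, |a * X ω| ∂P = a * √(2 * v / π) := by
  simp_rw [abs_mul, abs_of_nonneg ha]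
  rw [integral_const_mul, hX.integral_abs_of_gaussianReal_zero]

end ProbabilityTheory.HasLaw

lemma isLeast_mul_of_budget {c κ B : ℝ} (hc : c < 0) (hκ : 0 < κ) (hB : 0 ≤ B) :
    IsLeast {e | ∃ a : ℝ, 0 ≤ a ∧ a * κ ≤ B ∧ e = c * a} (c * (B / κ)) := by
  refine ⟨⟨B / κ, by positivity, (div_mul_cancel₀ B hκ.ne').le, rfl⟩, ?_⟩
  rintro e ⟨a, -, hcost, rfl⟩
  exact mul_le_mul_of_nonpos_left ((le_div_iff₀ hκ).mpr hcost) hc.le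

theorem stmt16_general {Ω : Type*} [MeasurableSpace Ω] (P : Measure Ω)
    (X UY : Ω → ℝ)
    (hX : P.map X = gaussianReal 0 1)
    (hUYint : Integrable UY P)
    (hUYmean : ∫ ω, UY ω ∂P = 0)
    (B : ℝ) (hB : 0 < B) :
    IsLeast {e : ℝ | ∃ a : ℝ, 0 ≤ a ∧ (∫ ω, |a * X ω| ∂P) ≤ B ∧
        e = ∫ ω, (-3 * (a * X ω) * X ω + UY ω) ∂P}
      (-3 * (B * Real.sqrt (Real.pi / 2))) ∧
    (∀ z : ℝ, |z| ≤ B → ∫ ω, (-3 * z * X ω + UY ω) ∂P = 0) ∧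
    -3 * (B * Real.sqrt (Real.pi / 2)) < 0 := by
  have hLaw : HasLaw X (gaussianReal 0 1) P :=
    ⟨aemeasurable_of_map_neZero (by rw [hX]; infer_instance), hX⟩
  have hκ : (0 : ℝ) < √(2 / π) := by positivity
  have hsqrt : √(π / 2) = 1 / √(2 / π) := by
    rw [one_div, ← sqrt_inv, inv_div]
  have hset : {e : ℝ | ∃ a : ℝ, 0 ≤ a ∧ (∫ ω, |a * X ω| ∂P) ≤ B ∧
      e = ∫ ω, (-3 * (a * X ω) * X ω + UY ω) ∂P} =
      {e | ∃ a : ℝ, 0 ≤ a ∧ a * √(2 / π) ≤ B ∧ e = -3 * a} := by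
    ext e
    refine exists_congr fun a ↦ and_congr_right fun ha ↦ ?_
    rw [hLaw.integral_abs_const_mul ha, hLaw.integral_mul_mul_add hUYint hUYmean]
    simp
  refine ⟨?_, fun z _ ↦ hLaw.integral_const_mul_add hUYint hUYmean _,
    mul_neg_of_neg_of_pos (by norm_num) (by positivity)⟩
  rw [hset, hsqrt, mul_one_div]
  exact isLeast_mul_of_budget (by norm_num) hκ hB.le

/-- For X ~ N(0,1) independent of U_Y with E[U_Y] = 0 and outcome
Y = -3ZX + U_Y: among functional interventions Z = aX with a ≥ 0 under the budget
constraint E[|aX|] ≤ B, the optimal target effect is -3a* with a* = B·√(π/2)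
(it is the least achievable value, attained within budget); every budget-feasible
hard intervention Z = z (|z| ≤ B) yields E[Y] = 0; hence for B > 0 the best
functional intervention strictly outperforms every budget-feasible hard one. -/
theorem stmt16 {Ω : Type*} [MeasurableSpace Ω] (P : Measure Ω) [IsProbabilityMeasure P]
    (X UY : Ω → ℝ)
    (hInd : IndepFun X UY P)
    (hX : P.map X = gaussianReal 0 1)
    (hUYint : Integrable UY P)
    (hUYmean : ∫ ω, UY ω ∂P = 0)
    (B : ℝ) (hB : 0 < B) :
    IsLeast {e : ℝ | ∃ a : ℝ, 0 ≤ a ∧ (∫ ω, |a * X ω| ∂P) ≤ B ∧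
        e = ∫ ω, (-3 * (a * X ω) * X ω + UY ω) ∂P}
      (-3 * (B * Real.sqrt (Real.pi / 2))) ∧
    (∀ z : ℝ, |z| ≤ B → ∫ ω, (-3 * z * X ω + UY ω) ∂P = 0) ∧
    -3 * (B * Real.sqrt (Real.pi / 2)) < 0 :=
  stmt16_general P X UY hX hUYint hUYmean B hB
end
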